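/- arXiv:2504.18998 — 5 statements merged into one kernel-verified Lean document; each statement's English description precedes it below -/
import Mathlib

section
/- For all integers m ≥ 1, the identity Σ_{n=1}^{m} 2(-1)^{m-n} C(2n-1, m) C(2m+1, 2n) (-1)^{n+1} B_{2n} = 1 holds, where B_{2n} denotes the Bernoulli numbers (with B_1 = -1/2 convention, i.e. B_{2n} = B_{2n}(0)). -/
/-!
For odd `N = 2m + 1` the reflection `B_N(1 - x) = -B_N(x)`, homogenized at `x = X / (X + 1)`,
becomes a polynomial identity between `∑ⱼ C(N, j) Bⱼ Xᴺ⁻ʲ (X + 1)ʲ` and `∑ⱼ C(N, j) Bⱼ (X + 1)ʲ`.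
Only `B₀`, `B₁` and the even Bernoulli numbers survive, and after dividing by `X + 1` it reads
`Q + X²ᵐ Q(1/X) = (N/2)(1 + X²ᵐ) - (1 + Xᴺ)/(1 + X)` with `Q = ∑ₙ C(N, 2n) B₂ₙ (X + 1)²ⁿ⁻¹`.
The coefficient of the middle power `Xᵐ` is the same in `Q` and in its reversal `X²ᵐ Q(1/X)`,
namely the sum `∑ₙ C(N, 2n) C(2n - 1, m) B₂ₙ`, so twice that sum is `-(-1)ᵐ`.
-/

open Polynomial hiding bernoulli
open Finset

theorem pow_mul_bernoulli_eval_div (N : ℕ) (x : ℚ) {y : ℚ} (hy : y ≠ 0) :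
    y ^ N * (Polynomial.bernoulli N).eval (x / y) =
      ∑ j ∈ range (N + 1), bernoulli j * N.choose j * (x ^ (N - j) * y ^ j) := by
  rw [Polynomial.bernoulli, eval_finsetSum, mul_sum]
  refine sum_congr rfl fun j hj => ?_
  obtain ⟨k, rfl⟩ : ∃ k, N = k + j := ⟨N - j, by have := mem_range.1 hj; omega⟩
  rw [eval_monomial, Nat.add_sub_cancel, div_pow, pow_add]
  field_simp

theorem sum_bernoulli_smul_X_pow_mul_X_add_one_pow (N : ℕ) :
    ∑ j ∈ range (N + 1), (bernoulli j * N.choose j) • (X ^ (N - j) * (X + 1) ^ j : ℚ[X]) =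
      (-1) ^ N * ∑ j ∈ range (N + 1), (bernoulli j * N.choose j) • (X + 1 : ℚ[X]) ^ j := by
  refine eq_of_infinite_eval_eq _ _ <| (Set.finite_singleton (-1)).infinite_compl.mono ?_
  intro r (hr : r ≠ -1)
  have hr1 : r + 1 ≠ 0 := fun h => hr (eq_neg_of_add_eq_zero_left h)
  have hreflect : r / (r + 1) = 1 - 1 / (r + 1) := by field_simp; ring
  simp only [Set.mem_ofPred_eq, eval_finsetSum, eval_mul, eval_smul, eval_pow, eval_add, eval_X,
    eval_one, eval_neg, smul_eq_mul]
  rw [← pow_mul_bernoulli_eval_div N r hr1, hreflect, bernoulli_eval_one_sub, mul_left_comm,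
    pow_mul_bernoulli_eval_div N 1 hr1]
  simp only [one_pow, one_mul]

theorem sum_range_two_mul_add_two {M : Type*} [AddCommMonoid M] (f : ℕ → M) (m : ℕ) :
    ∑ j ∈ range (2 * m + 2), f j = f 0 + f 1 + ∑ n ∈ Icc 1 m, (f (2 * n) + f (2 * n + 1)) := by
  induction m with
  | zero => simp [sum_range_succ]
  | succ m ih =>
    rw [show 2 * (m + 1) + 2 = 2 * m + 2 + 1 + 1 by ring, sum_range_succ, sum_range_succ, ih,
      sum_Icc_succ_top (by omega)]
    simp only [add_assoc, show 2 * m + 2 = 2 * (m + 1) by ring,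
      show 2 * m + 3 = 2 * (m + 1) + 1 by ring]

theorem sum_range_bernoulli_mul_choose_smul {M : Type*} [AddCommGroup M] [Module ℚ M] (m : ℕ)
    (g : ℕ → M) :
    ∑ j ∈ range (2 * m + 2), (bernoulli j * (2 * m + 1).choose j) • g j =
      g 0 - ((2 * m + 1 : ℚ) / 2) • g 1 +
        ∑ n ∈ Icc 1 m, (bernoulli (2 * n) * (2 * m + 1).choose (2 * n)) • g (2 * n) := by
  have hodd : ∀ n ∈ Icc 1 m, bernoulli (2 * n + 1) = 0 := fun n hn =>
    bernoulli_eq_zero_of_odd (odd_two_mul_add_one n) (by have := (mem_Icc.1 hn).1; omega)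
  rw [sum_range_two_mul_add_two, sum_congr rfl fun n hn => by rw [hodd n hn, zero_mul, zero_smul,
    add_zero]]
  simp only [_root_.bernoulli_zero, _root_.bernoulli_one, Nat.choose_zero_right,
    Nat.choose_one_right]
  push_cast
  module

theorem coeff_one_add_X_pow_mul_X_add_one_pow {R : Type*} [Semiring R] {a b m : ℕ}
    (h : a + b = 2 * m) : ((1 + X ^ a) * (X + 1 : R[X]) ^ b).coeff m = 2 * (b.choose m : R) := by
  rw [add_mul, one_mul, coeff_add, coeff_X_pow_mul', coeff_X_add_one_pow, two_mul]
  split_ifs with ha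
  · rw [coeff_X_add_one_pow, Nat.choose_symm_of_eq_add (by omega : b = (m - a) + m)]
  · simp [Nat.choose_eq_zero_of_lt (by omega : b < m)]

theorem sum_bernoulli_smul_one_add_X_pow_mul_X_add_one_pow (m : ℕ) :
    ∑ n ∈ Icc 1 m, (bernoulli (2 * n) * (2 * m + 1).choose (2 * n)) •
        ((1 + X ^ (2 * m + 1 - 2 * n)) * (X + 1 : ℚ[X]) ^ (2 * n - 1)) =
      ((2 * m + 1 : ℚ) / 2) • (1 + X ^ (2 * m)) - ∑ i ∈ range (2 * m + 1), (-X) ^ i := by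
  have hrefl := sum_bernoulli_smul_X_pow_mul_X_add_one_pow (2 * m + 1)
  rw [(odd_two_mul_add_one m).neg_one_pow, neg_one_mul, eq_neg_iff_add_eq_zero,
    ← sum_add_distrib] at hrefl
  simp_rw [← smul_add] at hrefl
  rw [sum_range_bernoulli_mul_choose_smul] at hrefl
  have hgeom : (X + 1 : ℚ[X]) * ∑ i ∈ range (2 * m + 1), (-X) ^ i = X ^ (2 * m + 1) + 1 := by
    have h := mul_neg_geom_sum (-X : ℚ[X]) (2 * m + 1)
    rw [(odd_two_mul_add_one m).neg_pow, sub_neg_eq_add, sub_neg_eq_add] at h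
    rw [add_comm X, h, add_comm]
  have heven : ∀ n ∈ Icc 1 m, (X + 1 : ℚ[X]) *
      ((1 + X ^ (2 * m + 1 - 2 * n)) * (X + 1 : ℚ[X]) ^ (2 * n - 1)) =
      X ^ (2 * m + 1 - 2 * n) * (X + 1) ^ (2 * n) + (X + 1) ^ (2 * n) := by
    intro n hn
    have hpow : (X + 1 : ℚ[X]) ^ (2 * n) = (X + 1) * (X + 1) ^ (2 * n - 1) := by
      rw [← pow_succ']
      congr 1
      have := (mem_Icc.1 hn).1
      omega
    rw [hpow]
    ring
  refine mul_left_cancel₀ (X_add_C_ne_zero (1 : ℚ)) ?_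
  rw [C_1, mul_sum]
  simp_rw [mul_smul_comm]
  rw [sum_congr rfl fun n hn => by rw [heven n hn]]
  simp only [smul_eq_C_mul, Nat.sub_zero, Nat.add_sub_cancel, pow_zero, pow_one, mul_one]
    at hrefl ⊢
  linear_combination hrefl + hgeom

theorem two_mul_sum_bernoulli_mul_choose_mul_choose {m : ℕ} (hm : 1 ≤ m) :
    2 * ∑ n ∈ Icc 1 m, bernoulli (2 * n) * (2 * m + 1).choose (2 * n) * (2 * n - 1).choose m =
      (-1) ^ (m + 1) := by
  have h := congrArg (coeff · m) (sum_bernoulli_smul_one_add_X_pow_mul_X_add_one_pow m)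
  have hgeom : (∑ i ∈ range (2 * m + 1), (-X : ℚ[X]) ^ i).coeff m = (-1) ^ m := by
    simp_rw [finsetSum_coeff, ← neg_one_smul ℚ X, _root_.smul_pow, coeff_smul, coeff_X_pow,
      smul_ite, smul_zero, smul_eq_mul, mul_one, sum_ite_eq, mem_range]
    exact if_pos (by omega)
  simp only [finsetSum_coeff, coeff_smul, coeff_sub, coeff_add, coeff_one, coeff_X_pow,
    smul_eq_mul, hgeom] at h
  rw [sum_congr rfl fun n hn => by
    rw [coeff_one_add_X_pow_mul_X_add_one_pow (by have := mem_Icc.1 hn; omega)]] at h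
  rw [if_neg (by omega), if_neg (by omega), add_zero, mul_zero, zero_sub] at h
  rw [mul_sum, pow_succ, mul_neg_one, ← h]
  exact sum_congr rfl fun n _ => by ring

/-- For all integers `m ≥ 1`,
`Σ_{n=1}^{m} 2 (-1)^{m-n} C(2n-1, m) C(2m+1, 2n) (-1)^{n+1} B_{2n} = 1`. -/
theorem bernoulli_partition_matrix_row_sum :
    ∀ m : ℕ, 1 ≤ m →
      ∑ n ∈ Finset.Icc 1 m,
        (2 * (-1 : ℚ) ^ (m - n) * (Nat.choose (2 * n - 1) m : ℚ) *
          (Nat.choose (2 * m + 1) (2 * n) : ℚ) *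
          ((-1 : ℚ) ^ (n + 1) * bernoulli (2 * n))) = 1 := by
  intro m hm
  calc _ = (-1) ^ (m + 1) * (2 * ∑ n ∈ Icc 1 m,
          bernoulli (2 * n) * (2 * m + 1).choose (2 * n) * (2 * n - 1).choose m) := by
        rw [mul_sum, mul_sum]
        refine sum_congr rfl fun n hn => ?_
        have hsign : (-1 : ℚ) ^ (m - n) * (-1) ^ (n + 1) = (-1) ^ (m + 1) := by
          rw [← pow_add, show m - n + (n + 1) = m + 1 by have := (mem_Icc.1 hn).2; omega]
        rw [← hsign]
        ring
    _ = 1 := by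
      rw [two_mul_sum_bernoulli_mul_choose_mul_choose hm, ← pow_add, ← two_mul]
      exact (even_two_mul _).neg_one_pow
end

section
/- For all integers m ≥ 1, the identity Σ_{n=1}^{m} (-1)^{m-n} 4^m C(m, 2(m-n)) (-1)^n E_{2n}(1/2) = 1 holds, where E_{2n}(x) is the Euler polynomial. -/
/-!
Put `v n = E_n(1/2)`. Its exponential generating function `2 e^{t/2} / (e^t + 1) = sech (t/2)` is
even, so `v` vanishes at odd indices. Let `L` be the linear functional `X ^ n ↦ v n` on
polynomials. The exponential generating function of `n ↦ L ((X + 1/2) ^ n)` is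
`H t = e^{t/2} sech (t/2)`, and `H t + H (-t) = 2`, so `L ((X + 1/2) ^ (2 j)) = 0` for `j ≥ 1`.
Up to the factor `(-4) ^ m` and the vanishing odd terms, the sum is
`L (X ^ m (X + 1) ^ m) = L (((X + 1/2) ^ 2 - 1/4) ^ m) = (-1/4) ^ m`.
-/

open Finset Polynomial FormalMultilinearSeries
open scoped Nat

def HasEGF (a : ℕ → ℝ) (f : ℝ → ℝ) : Prop :=
  ∀ t : ℝ, |t| < 1 → HasSum (fun n => a n * t ^ n / n !) (f t)


theorem hasEGF_exp_mul (c : ℝ) : HasEGF (fun n => c ^ n) (fun t => Real.exp (c * t)) :=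
  fun t _ => by
    simpa [Real.exp_eq_exp_ℝ, mul_pow] using NormedSpace.expSeries_div_hasSum_exp (c * t)

theorem hasEGF_const (c : ℝ) : HasEGF (Pi.single 0 c) (fun _ => c) := fun t _ => by
  convert hasSum_pi_single (0 : ℕ) c using 1
  funext n
  rcases eq_or_ne n 0 with rfl | hn
  · simp
  · simp [hn]

namespace HasEGF

variable {a b : ℕ → ℝ} {f g : ℝ → ℝ}

theorem hasFPowerSeriesOnBall (h : HasEGF a f) :
    HasFPowerSeriesOnBall f (ofScalars ℝ fun n => a n / (n ! : ℝ)) 0 1 := by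
  set p := ofScalars ℝ fun n => a n / (n ! : ℝ)
  have hsum : ∀ y : ℝ, ‖y‖ < 1 → HasSum (fun n => p n fun _ => y) (f y) := fun y hy => by
    simpa [p, ofScalars_apply_eq, mul_div_right_comm, mul_comm] using h y hy
  refine ⟨ENNReal.le_of_forall_nnreal_lt fun r hr => ?_, one_pos, fun {y} hy => ?_⟩
  · refine p.le_radius_of_tendsto (l := 0) ?_
    have hr' : ‖(r : ℝ)‖ < 1 := by simpa using hr
    simpa [p, ofScalars_norm, norm_pow, mul_comm] using
      (hsum r hr').summable.tendsto_atTop_zero.norm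
  · simpa using hsum y (by simpa [← ofReal_norm] using hy)

theorem unique (ha : HasEGF a f) (hb : HasEGF b f) : a = b := by
  have h := ofScalars_series_injective ℝ ℝ
    (ha.hasFPowerSeriesOnBall.hasFPowerSeriesAt.eq_formalMultilinearSeries
      hb.hasFPowerSeriesOnBall.hasFPowerSeriesAt)
  funext n
  simpa [Nat.factorial_ne_zero] using congrFun h n

theorem summable_norm (h : HasEGF a f) {t : ℝ} (ht : |t| < 1) :
    Summable fun n => ‖a n * t ^ n / (n ! : ℝ)‖ := by
  have hlt : (‖t‖₊ : ENNReal) < (ofScalars ℝ fun n => a n / (n ! : ℝ)).radius :=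
    lt_of_lt_of_le (by simpa [← NNReal.coe_lt_coe] using ht) h.hasFPowerSeriesOnBall.r_le
  simpa [ofScalars_norm, norm_pow, div_mul_eq_mul_div] using
    (ofScalars ℝ fun n => a n / (n ! : ℝ)).summable_norm_mul_pow hlt

theorem add (ha : HasEGF a f) (hb : HasEGF b g) : HasEGF (a + b) (f + g) := fun t ht => by
  simpa [add_mul, add_div] using (ha t ht).add (hb t ht)

theorem comp_neg (h : HasEGF a f) : HasEGF (fun n => (-1) ^ n * a n) (fun t => f (-t)) :=
  fun t ht => by
    simpa [neg_pow t, mul_left_comm, mul_assoc] using h (-t) (by rwa [abs_neg])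

theorem mul (ha : HasEGF a f) (hb : HasEGF b g) :
    HasEGF (fun n => ∑ k ∈ range (n + 1), n.choose k * a k * b (n - k)) (f * g) := fun t ht => by
  have hprod := hasSum_sum_range_mul_of_summable_norm (ha.summable_norm ht) (hb.summable_norm ht)
  rw [(ha t ht).tsum_eq, (hb t ht).tsum_eq] at hprod
  refine hprod.congr_fun fun n => ?_
  rw [sum_mul, sum_div]
  refine sum_congr rfl fun k hk => ?_
  have hkn : k ≤ n := Nat.lt_succ_iff.mp (mem_range.mp hk)
  rw [Nat.cast_choose ℝ hkn, ← Nat.sub_add_cancel hkn, pow_add]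
  simp only [Nat.add_sub_cancel]
  field_simp

theorem odd_coeff_eq_zero (h : HasEGF a f) (hf : Function.Even f) (k : ℕ) : a (2 * k + 1) = 0 := by
  have hneg : HasEGF (fun n => (-1) ^ n * a n) f := by simpa only [hf _] using h.comp_neg
  have := congrFun (hneg.unique h) (2 * k + 1)
  rw [(odd_two_mul_add_one k).neg_one_pow] at this
  linarith

theorem even_coeff_eq_zero_pow (h : HasEGF a f) (hf : ∀ t, f t + f (-t) = 2) (j : ℕ) :
    a (2 * j) = 0 ^ j := by
  have hsym : HasEGF (a + fun n => (-1) ^ n * a n) fun _ => 2 := by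
    simpa only [Pi.add_def, hf] using h.add h.comp_neg
  have := congrFun (hsym.unique (hasEGF_const 2)) (2 * j)
  rw [Pi.add_apply, (even_two_mul j).neg_one_pow, one_mul] at this
  rcases j with _ | j
  · simp only [mul_zero, Pi.single_eq_same] at this
    norm_num; linarith
  · rw [Pi.single_eq_of_ne (by omega)] at this
    rw [zero_pow j.succ_ne_zero]; linarith

end HasEGF

noncomputable def momentFunctional {R : Type*} [CommSemiring R] (v : ℕ → R) : R[X] →ₗ[R] R :=
  lsum fun n => v n • LinearMap.id

section MomentFunctional

variable {R : Type*} [CommSemiring R] (v : ℕ → R)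

@[simp]
theorem momentFunctional_X_pow (n : ℕ) : momentFunctional v (X ^ n) = v n := by
  simp [momentFunctional, ← monomial_one_right_eq_X_pow, lsum_apply]

theorem momentFunctional_C_mul (c : R) (p : R[X]) :
    momentFunctional v (C c * p) = c * momentFunctional v p := by
  rw [← smul_eq_C_mul, map_smul, smul_eq_mul]

theorem momentFunctional_X_add_C_pow (c : R) (n : ℕ) :
    momentFunctional v ((X + C c) ^ n) = ∑ k ∈ range (n + 1), n.choose k * v k * c ^ (n - k) := by
  rw [add_pow, map_sum]
  refine sum_congr rfl fun k _ => ?_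
  rw [← C_pow, ← map_natCast C, mul_assoc, ← C_mul, mul_comm, momentFunctional_C_mul,
    momentFunctional_X_pow]
  ring

theorem momentFunctional_X_pow_mul_X_add_one_pow (m : ℕ) :
    momentFunctional v (X ^ m * (X + 1) ^ m) = ∑ k ∈ range (m + 1), m.choose k * v (2 * m - k) := by
  rw [add_comm, add_pow, mul_sum, map_sum]
  refine sum_congr rfl fun k hk => ?_
  have hkm : k ≤ m := Nat.lt_succ_iff.mp (mem_range.mp hk)
  rw [one_pow, one_mul, ← mul_assoc, ← pow_add, ← map_natCast C, mul_comm, momentFunctional_C_mul,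
    momentFunctional_X_pow, show m + (m - k) = 2 * m - k by omega]

end MomentFunctional

theorem momentFunctional_X_pow_mul_X_add_one_pow_of_shifted {K : Type*} [Field K]
    [CharZero K]
    {v : ℕ → K} (hv : ∀ j, momentFunctional v ((X + C (1 / 2)) ^ (2 * j)) = 0 ^ j) (m : ℕ) :
    momentFunctional v (X ^ m * (X + 1) ^ m) = (-1 / 4) ^ m := by
  have hsq : X ^ m * (X + 1) ^ m = ((X + C (1 / 2)) ^ 2 + C (-1 / 4) : K[X]) ^ m := by
    rw [← mul_pow]
    congr 1
    have h1 : (2 : K[X]) * C (1 / 2) = 1 := by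
      rw [← map_ofNat C 2, ← C_mul, mul_one_div_cancel two_ne_zero, C_1]
    have h2 : C (1 / 2) ^ 2 + C (-1 / 4) = (0 : K[X]) := by
      rw [← C_pow, ← C_add]; norm_num
    linear_combination (-X) * h1 - h2
  have hterm (k : ℕ) : momentFunctional v (((X + C (1 / 2)) ^ 2) ^ k * C (-1 / 4) ^ (m - k) *
      (m.choose k : K[X])) = (-1 / 4) ^ (m - k) * m.choose k * 0 ^ k := by
    rw [← pow_mul, ← C_pow, ← map_natCast C, mul_assoc, ← C_mul, mul_comm, momentFunctional_C_mul,
      hv]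
  rw [hsq, add_pow, map_sum, sum_congr rfl fun k _ => hterm k, sum_range_succ']
  simp

theorem sum_choose_mul_sub_eq_sum_Icc {R : Type*} [CommSemiring R] {v : ℕ → R}
    (hv : ∀ k, v (2 * k + 1) = 0) {m : ℕ} (hm : 1 ≤ m) :
    ∑ k ∈ range (m + 1), m.choose k * v (2 * m - k) =
      ∑ n ∈ Icc 1 m, m.choose (2 * (m - n)) * v (2 * n) := by
  symm
  refine sum_bij_ne_zero (fun n _ _ => 2 * (m - n)) (fun n _ hn => ?_)
    (fun n₁ hn₁ _ n₂ hn₂ _ h => ?_) (fun k hk hk0 => ?_) (fun n hn _ => ?_)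
  · have : 2 * (m - n) ≤ m := by
      by_contra! h
      simp [Nat.choose_eq_zero_of_lt h] at hn
    simpa [Nat.lt_succ_iff] using this
  · simp only [mem_Icc] at hn₁ hn₂
    omega
  · have hkm : k ≤ m := Nat.lt_succ_iff.mp (mem_range.mp hk)
    obtain ⟨i, rfl | rfl⟩ := Nat.even_or_odd' k
    · refine ⟨m - i, mem_Icc.mpr ⟨by omega, by omega⟩, ?_, by omega⟩
      rwa [show 2 * (m - (m - i)) = 2 * i by omega, show 2 * (m - i) = 2 * m - 2 * i by omega]
    · rw [show 2 * m - (2 * i + 1) = 2 * (m - i - 1) + 1 by omega, hv, mul_zero] at hk0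
      exact absurd rfl hk0
  · rw [show 2 * m - 2 * (m - n) = 2 * n by simp only [mem_Icc] at hn; omega]

noncomputable def eulerHalfGen (t : ℝ) : ℝ := 2 * Real.exp (1 / 2 * t) / (Real.exp t + 1)

theorem eulerHalfGen_eq_inv_cosh (t : ℝ) : eulerHalfGen t = (Real.cosh (1 / 2 * t))⁻¹ := by
  have hsq : Real.exp t = Real.exp (1 / 2 * t) ^ 2 := by rw [sq, ← Real.exp_add]; ring_nf
  rw [eulerHalfGen, Real.cosh_eq, Real.exp_neg, hsq]
  have := Real.exp_pos (1 / 2 * t)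
  field_simp

theorem eulerHalfGen_even : Function.Even eulerHalfGen := fun t => by
  simp only [eulerHalfGen_eq_inv_cosh, mul_neg, Real.cosh_neg]

theorem eulerHalfGen_mul_exp_add_neg (t : ℝ) :
    eulerHalfGen t * Real.exp (1 / 2 * t) + eulerHalfGen (-t) * Real.exp (1 / 2 * -t) = 2 := by
  rw [eulerHalfGen_even, ← mul_add, mul_neg, eulerHalfGen_eq_inv_cosh, Real.cosh_eq]
  have := Real.exp_pos (1 / 2 * t)
  field_simp

/-- For all integers `m ≥ 1`,
`Σ_{n=1}^{m} (-1)^{m-n} 4^m C(m, 2(m-n)) (-1)^n E_{2n}(1/2) = 1`,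
where the Euler polynomials `E n x` are characterized by the generating
function `2 e^{xt}/(e^t + 1) = Σ_{n≥0} E_n(x) t^n / n!`. -/
theorem euler_partition_matrix_row_sum
    (E : ℕ → ℝ → ℝ)
    (hE : ∀ x t : ℝ, |t| < 1 →
      HasSum (fun n : ℕ => E n x * t ^ n / (Nat.factorial n : ℝ))
        (2 * Real.exp (x * t) / (Real.exp t + 1))) :
    ∀ m : ℕ, 1 ≤ m →
      ∑ n ∈ Finset.Icc 1 m,
        ((-1 : ℝ) ^ (m - n) * 4 ^ m * (Nat.choose m (2 * (m - n)) : ℝ) *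
          ((-1 : ℝ) ^ n * E (2 * n) (1 / 2))) = 1 := by
  intro m hm
  set v : ℕ → ℝ := fun n => E n (1 / 2)
  have hv : HasEGF v eulerHalfGen := hE (1 / 2)
  have hshift : ∀ j, momentFunctional v ((X + C (1 / 2)) ^ (2 * j)) = 0 ^ j := by
    have := hv.mul (hasEGF_exp_mul (1 / 2))
    simp_rw [← momentFunctional_X_add_C_pow] at this
    exact this.even_coeff_eq_zero_pow eulerHalfGen_mul_exp_add_neg
  have hsum : ∑ n ∈ Icc 1 m, (m.choose (2 * (m - n)) : ℝ) * v (2 * n) = (-1 / 4) ^ m := by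
    rw [← sum_choose_mul_sub_eq_sum_Icc (hv.odd_coeff_eq_zero eulerHalfGen_even) hm,
      ← momentFunctional_X_pow_mul_X_add_one_pow,
      momentFunctional_X_pow_mul_X_add_one_pow_of_shifted hshift]
  calc _ = (-4) ^ m * ∑ n ∈ Icc 1 m, (m.choose (2 * (m - n)) : ℝ) * v (2 * n) := by
        rw [mul_sum]
        refine sum_congr rfl fun n hn => ?_
        have hsign : (-1 : ℝ) ^ m = (-1) ^ (m - n) * (-1) ^ n := by
          rw [← pow_add, Nat.sub_add_cancel (mem_Icc.mp hn).2]
        rw [neg_pow (4 : ℝ), hsign]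
        ring
    _ = 1 := by rw [hsum, ← mul_pow]; norm_num
end

section
/- For all integers m ≥ 2, the Bernoulli numbers satisfy the recursion B_{2m} = (−1/((m+1)(2m+1))) Σ_{j=m−⌊m/2⌋}^{m−1} C(m+1, 2m−2j+1) (1+2j) B_{2j}. -/
/-!
Let `L : ℚ[X] → ℚ` be the umbral evaluation `Xᵏ ↦ Bₖ`. Since `L((X + 1)ᵏ) = B'ₖ = (-1)ᵏ Bₖ`,
`L` is invariant under the reflection `X ↦ -1 - X`, hence vanishes on the derivative of every
reflection-invariant polynomial, such as `(X (X + 1))ⁿ⁺¹`. Expanding that derivative gives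
Kaneko's recurrence `∑ᵢ C(n+1, i) (n+1+i) B_{n+i} = 0`. For `n = m ≥ 2` the terms with `n + i`
odd vanish; writing `m + i = 2j` and isolating the term `j = m` gives the recursion.
-/

open Finset
open Polynomial hiding bernoulli

noncomputable def bernoulliFunctional : ℚ[X] →ₗ[ℚ] ℚ :=
  lsum fun k => LinearMap.toSpanSingleton ℚ ℚ (bernoulli k)

lemma bernoulliFunctional_monomial (k : ℕ) (a : ℚ) :
    bernoulliFunctional (monomial k a) = a * bernoulli k := by
  simp [bernoulliFunctional]

lemma bernoulliFunctional_C_mul (c : ℚ) (p : ℚ[X]) :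
    bernoulliFunctional (C c * p) = c * bernoulliFunctional p := by
  rw [← smul_eq_C_mul, map_smul, smul_eq_mul]

lemma bernoulliFunctional_X_add_one_pow (k : ℕ) :
    bernoulliFunctional ((X + 1) ^ k) = bernoulli' k := by
  rw [← Polynomial.bernoulli_eval_one, Polynomial.bernoulli, add_pow, map_sum, eval_finsetSum]
  refine sum_congr rfl fun i _ => ?_
  rw [one_pow, mul_one, ← C_eq_natCast, mul_comm, C_mul_X_pow_eq_monomial,
    bernoulliFunctional_monomial]
  simp [mul_comm]

lemma bernoulliFunctional_comp_neg_X_sub_one (p : ℚ[X]) :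
    bernoulliFunctional (p.comp (-X - 1)) = bernoulliFunctional p := by
  induction p using Polynomial.induction_on' with
  | add p q hp hq => rw [add_comp, map_add, map_add, hp, hq]
  | monomial k a =>
    have h : (monomial k a).comp (-X - 1) = C (a * (-1) ^ k) * (X + 1) ^ k := by
      rw [monomial_comp, C_mul, C_pow, C_neg, C_1, mul_assoc, ← mul_pow]
      ring_nf
    rw [h, bernoulliFunctional_C_mul, bernoulliFunctional_X_add_one_pow,
      bernoulliFunctional_monomial, bernoulli'_eq_bernoulli, mul_assoc,
      ← mul_assoc _ _ (bernoulli k), ← mul_pow, neg_one_mul, neg_neg, one_pow, one_mul]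

lemma bernoulliFunctional_derivative_eq_zero {f : ℚ[X]} (hf : f.comp (-X - 1) = f) :
    bernoulliFunctional (derivative f) = 0 := by
  have hderiv : derivative f = -(derivative f).comp (-X - 1) := by
    conv_lhs => rw [← hf]
    simp [derivative_comp]
  have h : bernoulliFunctional (derivative f) = -bernoulliFunctional (derivative f) := by
    conv_lhs => rw [hderiv, map_neg, bernoulliFunctional_comp_neg_X_sub_one]
  linarith

theorem bernoulli_kaneko (n : ℕ) :
    ∑ i ∈ range (n + 2), ((n + 1).choose i : ℚ) * (n + 1 + i) * bernoulli (n + i) = 0 := by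
  set f : ℚ[X] := (X * (X + 1)) ^ (n + 1)
  have hf : f.comp (-X - 1) = f := by
    simp only [f, pow_comp, mul_comp, add_comp, X_comp, one_comp]
    ring
  have hexpand : f = ∑ i ∈ range (n + 2), monomial (n + 1 + i) ((n + 1).choose i : ℚ) := by
    rw [show f = X ^ (n + 1) * (X + 1) ^ (n + 1) from mul_pow .., add_pow, mul_sum]
    refine sum_congr rfl fun i _ => ?_
    rw [one_pow, mul_one, ← C_eq_natCast, ← C_mul_X_pow_eq_monomial]
    ring
  have hderiv : derivative f =
      ∑ i ∈ range (n + 2), monomial (n + i) ((n + 1).choose i * (n + 1 + i : ℚ)) := by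
    rw [hexpand, derivative_sum]
    refine sum_congr rfl fun i _ => ?_
    rw [derivative_monomial, Nat.add_right_comm, Nat.add_sub_cancel]
    congr 1
    push_cast
    ring
  rw [← bernoulliFunctional_derivative_eq_zero hf, hderiv, map_sum]
  simp_rw [bernoulliFunctional_monomial]

lemma bernoulli_kaneko_sum_eq_sum_Icc {m : ℕ} (hm : 2 ≤ m) :
    ∑ i ∈ range (m + 2), ((m + 1).choose i : ℚ) * (m + 1 + i) * bernoulli (m + i) =
      ∑ j ∈ Icc (m - m / 2) m,
        ((m + 1).choose (2 * m - 2 * j + 1) : ℚ) * (1 + 2 * j) * bernoulli (2 * j) := by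
  refine (sum_of_injOn (fun j => 2 * j - m) ?_ ?_ ?_ ?_).symm
  · intro j hj k hk (hjk : 2 * j - m = 2 * k - m)
    simp only [coe_Icc, Set.mem_Icc] at hj hk
    omega
  · intro j hj
    simp only [coe_Icc, Set.mem_Icc, coe_range, Set.mem_Iio] at hj ⊢
    omega
  · -- the indices `i` missed by `j ↦ 2j - m` are those with `m + i` odd
    intro i hi hnot
    have hodd : Odd (m + i) := by
      refine Nat.odd_iff.mpr (by_contra fun heven => hnot ⟨(m + i) / 2, ?_, ?_⟩)
      · simp only [coe_Icc, Set.mem_Icc, mem_range] at hi ⊢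
        omega
      · dsimp only
        omega
    rw [bernoulli_eq_zero_of_odd hodd (by omega), mul_zero]
  · intro j hj
    simp only [mem_Icc] at hj
    have hchoose : (m + 1).choose (2 * m - 2 * j + 1) = (m + 1).choose (2 * j - m) := by
      rw [← Nat.choose_symm (by omega)]
      congr 1
      omega
    rw [hchoose, show m + (2 * j - m) = 2 * j by omega, Nat.cast_sub (by omega)]
    push_cast
    ring

/-- Bernoulli recursion: for all integers `m ≥ 2`,
`B_{2m} = (−1/((m+1)(2m+1))) Σ_{j=m−⌊m/2⌋}^{m−1} C(m+1, 2m−2j+1) (1+2j) B_{2j}`. -/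
theorem bernoulli_recursion :
    ∀ m : ℕ, 2 ≤ m →
      bernoulli (2 * m) =
        (-1 / (((m : ℚ) + 1) * (2 * (m : ℚ) + 1))) *
          ∑ j ∈ Finset.Icc (m - m / 2) (m - 1),
            (Nat.choose (m + 1) (2 * m - 2 * j + 1) : ℚ) * (1 + 2 * (j : ℚ)) *
              bernoulli (2 * j) := by
  intro m hm
  have h := bernoulli_kaneko m
  rw [bernoulli_kaneko_sum_eq_sum_Icc hm, ← insert_Icc_sub_one_right_eq_Icc (by omega),
    sum_insert (by simp only [mem_Icc]; omega), Nat.sub_self, Nat.choose_one_right] at h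
  field_simp
  push_cast at h
  linear_combination h
end

section
/- For every integer n ≥ 2, the first subdiagonal entry of the inverse Bernoulli-partition matrix is b(n, n−1) = (1/6)(n−2) n!(n−1)!/(2n−1)!. -/
/-!
Fix `0 < x < 1`. Summing the double series over `n` first writes the generating function, for
`0 < y < 1`, as a power series `∑ₖ cₖ(x) yᵏ` with `cₖ(x) = ∑ₙ x^{2n}/(2n)! A^{(n)}_k`.
The variable `√y` enters the generating function only through `cosh (x√y/2)` and
`sinh (x√y/2) / (x√y/2)`, which are power series in `y`; so the generating function extends to a
function differentiable at `y = 0`, and `c₁(x)` is its derivative there,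
`x sinh x / 8 - x² / 8 - x² (cosh x - 1) / 24`. Expanding this in `t = x²` and comparing
coefficients gives `A^{(n)}_1 = -n (n - 2) / 6`, hence the value of `b(n, n - 1)`.
-/

/-- `b(n,k) = (-1)^{n-k} A^{(n)}_{n-k} (k!)² / (2k+1)!`. -/
noncomputable def bcoef (A : ℕ → ℕ → ℝ) (n k : ℕ) : ℝ :=
  (-1 : ℝ) ^ (n - k) * A n (n - k) * (Nat.factorial k : ℝ) ^ 2 /
    (Nat.factorial (2 * k + 1) : ℝ)

open Real Filter Set Topology Nat
open FormalMultilinearSeries (ofScalars ofScalarsSum)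

section PowerSeries

open FormalMultilinearSeries

variable {a b : ℕ → ℝ} {S : ℝ → ℝ} {δ : ℝ}

theorem hasFPowerSeriesAt_ofScalarsSum_of_summable {r : ℝ} (hr : r ≠ 0)
    (h : Summable fun k => a k * r ^ k) :
    HasFPowerSeriesAt (ofScalarsSum a) (ofScalars ℝ a) 0 := by
  have hrad : (‖r‖₊ : ENNReal) ≤ (ofScalars ℝ a).radius := by
    refine (ofScalars ℝ a).le_radius_of_tendsto (l := 0) ?_
    simpa [ofScalars_norm, norm_mul, norm_pow] using h.tendsto_atTop_zero.norm
  exact ((ofScalars ℝ a).hasFPowerSeriesOnBall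
    (lt_of_lt_of_le (by simpa using hr) hrad)).hasFPowerSeriesAt

theorem hasDerivAt_ofScalarsSum_of_summable {r : ℝ} (hr : r ≠ 0)
    (h : Summable fun k => a k * r ^ k) : HasDerivAt (ofScalarsSum a) (a 1) 0 := by
  simpa [ofScalars_apply_eq] using (hasFPowerSeriesAt_ofScalarsSum_of_summable hr h).hasDerivAt

theorem ofScalarsSum_eq_of_hasSum {y s : ℝ} (h : HasSum (fun k => a k * y ^ k) s) :
    ofScalarsSum a y = s := by
  simpa [ofScalars_sum_eq] using h.tsum_eq

theorem HasDerivAt.eq_of_eventuallyEq_nhdsGT {f g : ℝ → ℝ} {f' g' x : ℝ}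
    (hf : HasDerivAt f f' x) (hg : HasDerivAt g g' x) (hfg : f =ᶠ[𝓝[>] x] g) : f' = g' := by
  have hx : f x = g x := tendsto_nhds_unique
    (hf.continuousAt.tendsto.mono_left nhdsWithin_le_nhds)
    ((hg.continuousAt.tendsto.mono_left nhdsWithin_le_nhds).congr' hfg.symm)
  exact (uniqueDiffWithinAt_Ioi x).eq_deriv _
    (hf.hasDerivWithinAt.congr_of_eventuallyEq hfg.symm hx.symm) hg.hasDerivWithinAt

theorem coeff_one_eq_of_hasSum_pow {F : ℝ → ℝ} {F' : ℝ} (hδ : 0 < δ)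
    (h : ∀ y ∈ Ioo 0 δ, HasSum (fun k => a k * y ^ k) (F y)) (hF : HasDerivAt F F' 0) :
    a 1 = F' := by
  have hδ2 : δ / 2 ∈ Ioo 0 δ := ⟨by positivity, by linarith⟩
  refine (hasDerivAt_ofScalarsSum_of_summable hδ2.1.ne' (h _ hδ2).summable).eq_of_eventuallyEq_nhdsGT
    hF ?_
  filter_upwards [Ioo_mem_nhdsGT hδ] with y hy using ofScalarsSum_eq_of_hasSum (h y hy)

theorem eq_of_hasSum_pow (hδ : 0 < δ) (ha : ∀ y ∈ Ioo 0 δ, HasSum (fun k => a k * y ^ k) (S y))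
    (hb : ∀ y ∈ Ioo 0 δ, HasSum (fun k => b k * y ^ k) (S y)) : a = b := by
  have hδ2 : δ / 2 ∈ Ioo 0 δ := ⟨by positivity, by linarith⟩
  have hpa := hasFPowerSeriesAt_ofScalarsSum_of_summable hδ2.1.ne' (ha _ hδ2).summable
  have hpb := hasFPowerSeriesAt_ofScalarsSum_of_summable hδ2.1.ne' (hb _ hδ2).summable
  have hfreq : ∃ᶠ y : ℝ in 𝓝[≠] 0, ofScalarsSum a y = ofScalarsSum b y := by
    refine (Eventually.frequently (f := 𝓝[>] 0) ?_).filter_mono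
      (nhdsWithin_mono 0 fun y (hy : 0 < y) => hy.ne')
    filter_upwards [Ioo_mem_nhdsGT hδ] with y hy
    rw [ofScalarsSum_eq_of_hasSum (ha y hy), ofScalarsSum_eq_of_hasSum (hb y hy)]
  exact ofScalars_series_injective ℝ ℝ
    (hpa.eq_formalMultilinearSeries_of_eventually hpb
      ((hpa.analyticAt.frequently_eq_iff_eventually_eq hpb.analyticAt).mp hfreq))

end PowerSeries

namespace Real

theorem hasSum_cosh_sq (z : ℝ) : HasSum (fun k => ((2 * k)! : ℝ)⁻¹ * (z ^ 2) ^ k) (cosh z) := by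
  simpa [← pow_mul, div_eq_inv_mul] using hasSum_cosh z

theorem hasSum_sinh_div {z : ℝ} (hz : z ≠ 0) :
    HasSum (fun k => ((2 * k + 1)! : ℝ)⁻¹ * (z ^ 2) ^ k) (sinh z / z) := by
  refine ((hasSum_sinh z).div_const z).congr_fun fun k => ?_
  rw [← pow_mul, pow_succ]
  field_simp

end Real

noncomputable def coshSqrtCoeff (c : ℝ) (k : ℕ) : ℝ := ((2 * k)! : ℝ)⁻¹ * (c ^ 2) ^ k

noncomputable def sinhSqrtDivCoeff (c : ℝ) (k : ℕ) : ℝ := ((2 * k + 1)! : ℝ)⁻¹ * (c ^ 2) ^ k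

theorem sq_mul_sqrt {c y : ℝ} (hy : 0 ≤ y) : (c * √y) ^ 2 = c ^ 2 * y := by
  rw [mul_pow, sq_sqrt hy]

theorem hasSum_coshSqrtCoeff (c : ℝ) {y : ℝ} (hy : 0 ≤ y) :
    HasSum (fun k => coshSqrtCoeff c k * y ^ k) (cosh (c * √y)) := by
  simpa [coshSqrtCoeff, sq_mul_sqrt hy, mul_pow, mul_assoc] using Real.hasSum_cosh_sq (c * √y)

theorem hasSum_sinhSqrtDivCoeff {c y : ℝ} (hc : c ≠ 0) (hy : 0 < y) :
    HasSum (fun k => sinhSqrtDivCoeff c k * y ^ k) (sinh (c * √y) / (c * √y)) := by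
  simpa [sinhSqrtDivCoeff, sq_mul_sqrt hy.le, mul_pow, mul_assoc] using
    Real.hasSum_sinh_div (mul_ne_zero hc (sqrt_pos.mpr hy).ne')

theorem hasDerivAt_ofScalarsSum_coshSqrtCoeff (c : ℝ) :
    HasDerivAt (ofScalarsSum (coshSqrtCoeff c)) (c ^ 2 / 2) 0 := by
  convert hasDerivAt_ofScalarsSum_of_summable one_ne_zero
    (hasSum_coshSqrtCoeff c zero_le_one).summable using 1
  simp [coshSqrtCoeff]
  ring

theorem hasDerivAt_ofScalarsSum_sinhSqrtDivCoeff {c : ℝ} (hc : c ≠ 0) :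
    HasDerivAt (ofScalarsSum (sinhSqrtDivCoeff c)) (c ^ 2 / 6) 0 := by
  convert hasDerivAt_ofScalarsSum_of_summable one_ne_zero
    (hasSum_sinhSqrtDivCoeff hc one_pos).summable using 1
  simp [sinhSqrtDivCoeff]
  ring

noncomputable def faulhaberGF (x y : ℝ) : ℝ :=
  x * √y / 2 * (cosh (x / 2 * √(y + 4)) - cosh (x / 2 * √y)) / sinh (x / 2 * √y)

noncomputable def faulhaberGFCoeffOne (x : ℝ) : ℝ :=
  x * sinh x / 8 - x ^ 2 / 8 - x ^ 2 * (cosh x - 1) / 24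

noncomputable def faulhaberGFExt (x y : ℝ) : ℝ :=
  (cosh (x / 2 * √(y + 4)) - ofScalarsSum (coshSqrtCoeff (x / 2)) y) /
    ofScalarsSum (sinhSqrtDivCoeff (x / 2)) y

theorem faulhaberGF_eq_faulhaberGFExt {x y : ℝ} (hx : x ≠ 0) (hy : 0 < y) :
    faulhaberGF x y = faulhaberGFExt x y := by
  have hs : x / 2 * √y ≠ 0 := mul_ne_zero (by positivity) (sqrt_pos.mpr hy).ne'
  have hsinh : sinh (x / 2 * √y) ≠ 0 := sinh_ne_zero.mpr hs
  rw [faulhaberGF, faulhaberGFExt,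
    ofScalarsSum_eq_of_hasSum (hasSum_coshSqrtCoeff (x / 2) hy.le),
    ofScalarsSum_eq_of_hasSum (hasSum_sinhSqrtDivCoeff (by positivity) hy)]
  field_simp

theorem hasDerivAt_faulhaberGFExt {x : ℝ} (hx : x ≠ 0) :
    HasDerivAt (faulhaberGFExt x) (faulhaberGFCoeffOne x) 0 := by
  have hsqrt4 : √(4 : ℝ) = 2 := by
    rw [show (4 : ℝ) = 2 ^ 2 by norm_num, sqrt_sq zero_le_two]
  have hC := ((((hasDerivAt_id (0 : ℝ)).add_const 4).sqrt (by norm_num)).const_mul (x / 2)).cosh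
  simp only [id_eq, zero_add, hsqrt4] at hC
  have hQ0 : ofScalarsSum (sinhSqrtDivCoeff (x / 2)) (0 : ℝ) ≠ 0 := by simp [sinhSqrtDivCoeff]
  have h := (hC.sub (hasDerivAt_ofScalarsSum_coshSqrtCoeff (x / 2))).div
    (hasDerivAt_ofScalarsSum_sinhSqrtDivCoeff (c := x / 2) (by positivity)) hQ0
  refine h.congr_deriv ?_
  simp [faulhaberGFCoeffOne, coshSqrtCoeff, sinhSqrtDivCoeff, hsqrt4]
  ring

theorem hasSum_tsum_mul_pow_of_hasSum_prod {f : ℕ → ℕ → ℝ} {y s : ℝ}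
    (h : HasSum (fun p : ℕ × ℕ => f p.1 p.2 * y ^ p.2) s) :
    HasSum (fun k => (∑' m, f m k) * y ^ k) s := by
  have h' := (Equiv.prodComm ℕ ℕ).hasSum_iff.mpr h
  simpa only [Function.comp_def, Equiv.prodComm_apply, Prod.fst_swap, Prod.snd_swap,
    tsum_mul_right] using h'.prod_fiberwise fun k => (h'.summable.prod_factor k).hasSum

theorem summable_of_summable_prod_mul_pow {f : ℕ → ℕ → ℝ} {y : ℝ} (hy : y ≠ 0)
    (h : Summable fun p : ℕ × ℕ => f p.1 p.2 * y ^ p.2) (k : ℕ) : Summable fun m => f m k :=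
  (summable_mul_right_iff (pow_ne_zero k hy)).mp
    (((Equiv.prodComm ℕ ℕ).summable_iff.mpr h).prod_factor k)

theorem hasSum_column_one_of_hasSum_faulhaberGF {f : ℕ → ℕ → ℝ} {x : ℝ} (hx : x ≠ 0)
    (hf : ∀ y ∈ Ioo (0 : ℝ) 1, HasSum (fun p : ℕ × ℕ => f p.1 p.2 * y ^ p.2) (faulhaberGF x y)) :
    HasSum (fun m => f m 1) (faulhaberGFCoeffOne x) := by
  have hhalf : (1 / 2 : ℝ) ∈ Ioo 0 1 := by norm_num
  have hcol : ∀ y ∈ Ioo (0 : ℝ) 1,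
      HasSum (fun k => (∑' m, f m k) * y ^ k) (faulhaberGFExt x y) := fun y hy =>
    faulhaberGF_eq_faulhaberGFExt hx hy.1 ▸ hasSum_tsum_mul_pow_of_hasSum_prod (hf y hy)
  rw [← coeff_one_eq_of_hasSum_pow one_pos hcol (hasDerivAt_faulhaberGFExt hx)]
  exact (summable_of_summable_prod_mul_pow (by norm_num) (hf _ hhalf).summable 1).hasSum

theorem hasSum_faulhaberGFCoeffOne_div_sq {x : ℝ} (hx : x ≠ 0) :
    HasSum (fun m => (((2 * m + 1)! : ℝ)⁻¹ / 8 - ((2 * m)! : ℝ)⁻¹ / 24 -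
        if m = 0 then 1 / 12 else 0) * (x ^ 2) ^ m)
      (faulhaberGFCoeffOne x / x ^ 2) := by
  have h := (((Real.hasSum_sinh_div hx).div_const 8).sub ((Real.hasSum_cosh_sq x).div_const 24)).sub
    (hasSum_ite_eq 0 (1 / 12 : ℝ))
  have hsum : faulhaberGFCoeffOne x / x ^ 2 = sinh x / x / 8 - cosh x / 24 - 1 / 12 := by
    rw [faulhaberGFCoeffOne]
    field_simp
    ring
  rw [hsum]
  refine h.congr_fun fun m => ?_
  rcases m with _ | m
  · simp
  · simp
    ring

theorem eq_neg_mul_div_six_of_inv_factorial_mul_eq {a : ℝ} {n : ℕ}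
    (h : ((2 * (n + 1))! : ℝ)⁻¹ * a = ((2 * n + 1)! : ℝ)⁻¹ / 8 - ((2 * n)! : ℝ)⁻¹ / 24) :
    a = -((n + 1 : ℝ) * (n - 1)) / 6 := by
  rw [show 2 * (n + 1) = 2 * n + 1 + 1 by ring, factorial_succ, factorial_succ (2 * n)] at h
  push_cast at h
  field_simp at h
  linear_combination h / 192

theorem b_first_subdiagonal_general
    (A : ℕ → ℕ → ℝ)
    (hA : ∀ x y : ℝ, |x| < 1 → 0 < y → y < 1 →
      HasSum (fun p : ℕ × ℕ =>
        x ^ (2 * (p.1 + 1)) / (Nat.factorial (2 * (p.1 + 1)) : ℝ) *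
          A (p.1 + 1) p.2 * y ^ p.2)
        ((x * Real.sqrt y / 2) *
          (Real.cosh (x / 2 * Real.sqrt (y + 4)) - Real.cosh (x / 2 * Real.sqrt y)) /
          Real.sinh (x / 2 * Real.sqrt y))) :
    ∀ n : ℕ, 2 ≤ n →
      bcoef A n (n - 1) =
        (1 / 6) * ((n : ℝ) - 2) * (Nat.factorial n : ℝ) *
          (Nat.factorial (n - 1) : ℝ) / (Nat.factorial (2 * n - 1) : ℝ) := by
  have hcol : ∀ t ∈ Ioo (0 : ℝ) 1, HasSum (fun m => ((2 * (m + 1))! : ℝ)⁻¹ * A (m + 1) 1 * t ^ m)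
      (faulhaberGFCoeffOne √t / t) := by
    intro t ht
    have hx : √t ≠ 0 := (sqrt_pos.mpr ht.1).ne'
    have habs : |√t| < 1 := by
      rw [abs_of_nonneg (sqrt_nonneg t), sqrt_lt' one_pos, one_pow]
      exact ht.2
    refine ((hasSum_column_one_of_hasSum_faulhaberGF
      (f := fun m k => √t ^ (2 * (m + 1)) / ((2 * (m + 1))! : ℝ) * A (m + 1) k) hx
      fun y hy => hA _ y habs hy.1 hy.2).div_const t).congr_fun fun m => ?_
    rw [pow_mul, sq_sqrt ht.1.le, pow_succ]
    field_simp [ht.1.ne']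
  have hcoeff := eq_of_hasSum_pow one_pos hcol fun t ht => by
    simpa [sq_sqrt ht.1.le] using hasSum_faulhaberGFCoeffOne_div_sq (sqrt_pos.mpr ht.1).ne'
  intro n hn
  obtain ⟨m, rfl⟩ : ∃ m, n = m + 2 := ⟨n - 2, by omega⟩
  have hA1 : A (m + 2) 1 = -((m + 2 : ℝ) * m) / 6 := by
    have hm := congrFun hcoeff (m + 1)
    simp only [show m + 1 ≠ 0 by omega, if_false, sub_zero] at hm
    rw [eq_neg_mul_div_six_of_inv_factorial_mul_eq hm]
    push_cast
    ring
  rw [bcoef, show m + 2 - 1 = m + 1 by omega, show m + 2 - (m + 1) = 1 by omega,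
    show 2 * (m + 2) - 1 = 2 * (m + 1) + 1 by omega, hA1, factorial_succ (m + 1)]
  push_cast
  field_simp
  ring

/-- For every integer `n ≥ 2`, `b(n, n−1) = (1/6)(n−2) n!(n−1)!/(2n−1)!`. -/
theorem b_first_subdiagonal
    (A : ℕ → ℕ → ℝ)
    (hA0 : ∀ n k : ℕ, n ≤ k → A n k = 0)
    (hA : ∀ x y : ℝ, |x| < 1 → 0 < y → y < 1 →
      HasSum (fun p : ℕ × ℕ =>
        x ^ (2 * (p.1 + 1)) / (Nat.factorial (2 * (p.1 + 1)) : ℝ) *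
          A (p.1 + 1) p.2 * y ^ p.2)
        ((x * Real.sqrt y / 2) *
          (Real.cosh (x / 2 * Real.sqrt (y + 4)) - Real.cosh (x / 2 * Real.sqrt y)) /
          Real.sinh (x / 2 * Real.sqrt y))) :
    ∀ n : ℕ, 2 ≤ n →
      bcoef A n (n - 1) =
        (1 / 6) * ((n : ℝ) - 2) * (Nat.factorial n : ℝ) *
          (Nat.factorial (n - 1) : ℝ) / (Nat.factorial (2 * n - 1) : ℝ) :=
  b_first_subdiagonal_general A hA
end

section
/- For every integer n ≥ 3, the second subdiagonal entry of the inverse Bernoulli-partition matrix is b(n, n−2) = (7/360)(n−3)(n − 8/7) n!(n−2)!/(2n−3)!. -/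
/-!
Write `P_m(y) = ∑_k A^{(m)}_k y^k`. For fixed `0 < y < 1`, multiplying the generating function
by `sinh (x√y/2)` and comparing coefficients of `x^{2n+3}` gives
`∑_{i+j=n} 4^{i+1} P_{i+1}(y) y^j / ((2i+2)! (2j+1)!) = ((y+4)^{n+1} - y^{n+1}) / (2n+2)!`,
an identity of polynomials in `y`. Its coefficient of `y^d` determines `A^{(K+d+1)}_d` from the
`A^{(K+i+1)}_i` with `i < d`; for `d = 0, 1, 2` this yields `A^{(K+1)}_0 = 1`,
`A^{(K+2)}_1 = -(K+2)K/6` and `A^{(K+3)}_2 = (K+3)(K+2)K(7K+13)/360`, and the last one is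
`b(K+3, K+1)` up to the factorial normalisation.
-/

open Filter Topology Finset Polynomial Nat
open scoped NNReal

theorem eq_zero_of_hasSum_pow_eq_zero_on_Ioo {w : ℕ → ℝ} {ε : ℝ} (hε : 0 < ε)
    (h : ∀ t ∈ Set.Ioo 0 ε, HasSum (fun n => w n * t ^ n) 0) : w = 0 := by
  set p := FormalMultilinearSeries.ofScalars ℝ w
  have hsum : ∀ t ∈ Set.Ioo 0 ε, p.sum t = 0 := fun t ht => by
    simpa [p, FormalMultilinearSeries.ofScalarsSum] using
      (FormalMultilinearSeries.ofScalars_sum_eq w t).trans (h t ht).tsum_eq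
  have hrad : 0 < p.radius := by
    let r : ℝ≥0 := ⟨ε / 2, by positivity⟩
    have hr : (r : ℝ) ∈ Set.Ioo 0 ε := ⟨half_pos hε, half_lt_self hε⟩
    refine lt_of_lt_of_le (ENNReal.coe_pos.mpr (NNReal.coe_pos.mp hr.1))
      (p.le_radius_of_summable ?_)
    simpa [p, FormalMultilinearSeries.ofScalars_norm, norm_mul, norm_pow,
      abs_of_pos hr.1] using (summable_norm_iff.mpr (h r hr).summable)
  have hp := (p.hasFPowerSeriesOnBall hrad).hasFPowerSeriesAt
  have hfreq : ∃ᶠ t in 𝓝[≠] (0 : ℝ), p.sum t = 0 :=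
    ((eventually_nhdsWithin_of_forall hsum).filter_mono
      (nhdsWithin_le_of_mem (Ioo_mem_nhdsGT hε))).frequently.filter_mono
      (nhdsWithin_mono _ fun t ht => ne_of_gt ht)
  exact (FormalMultilinearSeries.ofScalars_series_eq_zero ℝ).mp
    (hp.locally_zero_iff.mp (hp.analyticAt.frequently_zero_iff_eventually_zero.mp hfreq))

theorem hasSum_sum_antidiagonal_mul {f g : ℕ → ℝ} {a b : ℝ} (hf : HasSum f a)
    (hg : HasSum g b) :
    HasSum (fun n => ∑ kl ∈ antidiagonal n, f kl.1 * g kl.2) (a * b) := by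
  have hf' := summable_norm_iff.mpr hf.summable
  have hg' := summable_norm_iff.mpr hg.summable
  rw [← hf.tsum_eq, ← hg.tsum_eq,
    tsum_mul_tsum_eq_tsum_sum_antidiagonal_of_summable_norm hf' hg']
  exact (summable_norm_sum_mul_antidiagonal_of_summable_norm hf' hg').of_norm.hasSum

theorem cast_factorial_two_mul_succ (m : ℕ) :
    ((2 * (m + 1))! : ℝ) = (2 * m + 2) * (2 * m + 1) * (2 * m)! := by
  rw [show 2 * (m + 1) = 2 * m + 1 + 1 by ring, factorial_succ, factorial_succ]
  push_cast
  ring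

theorem sinh_cauchy_term (z c p : ℝ) (i j : ℕ) :
    (2 * z) ^ (2 * (i + 1)) / (2 * (i + 1))! * p * ((z * c) ^ (2 * j + 1) / (2 * j + 1)!) =
      z ^ 3 * c * ((4 : ℝ) ^ (i + 1) / ((2 * (i + 1))! * (2 * j + 1)!) * p * (c ^ 2) ^ j *
        (z ^ 2) ^ (i + j)) := by
  rw [pow_succ (z * c), pow_mul, pow_mul, mul_pow z c, show (2 * z) ^ 2 = 4 * z ^ 2 by ring]
  field_simp
  ring

theorem cosh_sub_cosh_term (z c d : ℝ) (n : ℕ) :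
    z * c * ((z * d) ^ (2 * (n + 1)) / (2 * (n + 1))! - (z * c) ^ (2 * (n + 1)) / (2 * (n + 1))!) =
      z ^ 3 * c * (((d ^ 2) ^ (n + 1) - (c ^ 2) ^ (n + 1)) / (2 * (n + 1))! * (z ^ 2) ^ n) := by
  rw [pow_mul, pow_mul, mul_pow z, mul_pow z, mul_pow (z ^ 2), mul_pow (z ^ 2)]
  ring

noncomputable def faulhaberPoly (A : ℕ → ℕ → ℝ) (m : ℕ) : ℝ[X] :=
  ∑ k ∈ range m, C (A m k) * X ^ k

def HasFaulhaberGenFun (A : ℕ → ℕ → ℝ) : Prop :=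
  ∀ x y : ℝ, |x| < 1 → 0 < y → y < 1 →
    HasSum (fun p : ℕ × ℕ =>
      x ^ (2 * (p.1 + 1)) / (Nat.factorial (2 * (p.1 + 1)) : ℝ) * A (p.1 + 1) p.2 * y ^ p.2)
      ((x * Real.sqrt y / 2) *
        (Real.cosh (x / 2 * Real.sqrt (y + 4)) - Real.cosh (x / 2 * Real.sqrt y)) /
        Real.sinh (x / 2 * Real.sqrt y))

section Faulhaber

variable {A : ℕ → ℕ → ℝ}

theorem coeff_faulhaberPoly (hA0 : ∀ n k : ℕ, n ≤ k → A n k = 0) (m k : ℕ) :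
    (faulhaberPoly A m).coeff k = A m k := by
  simp only [faulhaberPoly, finsetSum_coeff, coeff_C_mul_X_pow, sum_ite_eq, mem_range]
  split_ifs with hk
  · rfl
  · exact (hA0 m k (not_lt.mp hk)).symm

theorem hasSum_eval_faulhaberPoly (hA0 : ∀ n k : ℕ, n ≤ k → A n k = 0) (m : ℕ) (y : ℝ) :
    HasSum (fun k => A m k * y ^ k) ((faulhaberPoly A m).eval y) := by
  simp only [faulhaberPoly, eval_finsetSum, eval_mul, eval_C, eval_pow, eval_X]
  exact hasSum_sum_of_ne_finset_zero fun k hk => by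
    rw [hA0 m k (not_lt.mp (mem_range.not.mp hk)), zero_mul]

namespace HasFaulhaberGenFun

variable (hA : HasFaulhaberGenFun A) (hA0 : ∀ n k : ℕ, n ≤ k → A n k = 0)
include hA hA0

theorem hasSum_faulhaberPoly {x y : ℝ} (hx : |x| < 1) (hy0 : 0 < y) (hy1 : y < 1) :
    HasSum (fun b => x ^ (2 * (b + 1)) / ((2 * (b + 1))! : ℝ) * (faulhaberPoly A (b + 1)).eval y)
      ((x * Real.sqrt y / 2) *
        (Real.cosh (x / 2 * Real.sqrt (y + 4)) - Real.cosh (x / 2 * Real.sqrt y)) /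
        Real.sinh (x / 2 * Real.sqrt y)) :=
  (hA x y hx hy0 hy1).prod_fiberwise fun b => by
    simpa only [mul_assoc] using (hasSum_eval_faulhaberPoly hA0 (b + 1) y).mul_left _

theorem sum_antidiagonal_eval_faulhaberPoly {y : ℝ} (hy0 : 0 < y) (hy1 : y < 1) (n : ℕ) :
    ∑ ij ∈ antidiagonal n, (4 : ℝ) ^ (ij.1 + 1) / ((2 * (ij.1 + 1))! * (2 * ij.2 + 1)!) *
        (faulhaberPoly A (ij.1 + 1)).eval y * y ^ ij.2 =
      ((y + 4) ^ (n + 1) - y ^ (n + 1)) / (2 * (n + 1))! := by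
  rw [← sub_eq_zero]
  revert n
  refine congrFun (eq_zero_of_hasSum_pow_eq_zero_on_Ioo (ε := 1 / 4) (by norm_num) fun s hs => ?_)
  -- With `x = 2z` and `z² = s`, `z³√y` times the `n`-th term is the coefficient of `z^(2n+3)`
  -- in `F(2z) sinh(z√y) - z√y (cosh(z√(y+4)) - cosh(z√y))`, where `F` is the generating function.
  obtain ⟨z, hz, rfl⟩ : ∃ z, 0 < z ∧ z ^ 2 = s :=
    ⟨√s, Real.sqrt_pos.mpr hs.1, Real.sq_sqrt hs.1.le⟩
  have hx : |2 * z| < 1 := by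
    rw [abs_of_pos (by positivity)]
    nlinarith [hs.2]
  have hF := hA.hasSum_faulhaberPoly hA0 hx hy0 hy1
  rw [mul_div_cancel_left₀ z two_ne_zero, show 2 * z * √y / 2 = z * √y by ring] at hF
  have hprod := hasSum_sum_antidiagonal_mul hF (Real.hasSum_sinh (z * √y))
  rw [div_mul_cancel₀ _ (Real.sinh_pos_iff.mpr (by positivity)).ne'] at hprod
  have hcosh :=
    ((Real.hasSum_cosh (z * √(y + 4))).sub (Real.hasSum_cosh (z * √y))).mul_left (z * √y)
  rw [← hasSum_nat_add_iff' 1] at hcosh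
  refine (hasSum_mul_left_iff (by positivity : z ^ 3 * √y ≠ 0)).mp ?_
  convert hprod.sub hcosh using 1
  · rfl
  · ext n
    rw [cosh_sub_cosh_term, Real.sq_sqrt hy0.le, Real.sq_sqrt (by linarith)]
    simp only [sinh_cauchy_term, Real.sq_sqrt hy0.le, ← mul_sum, ← mul_sub, sub_mul, sum_mul]
    congr 2
    refine sum_congr rfl fun ij hij => ?_
    rw [mem_antidiagonal.mp hij]
  · simp

theorem sum_antidiagonal_faulhaberPoly (n : ℕ) :
    ∑ ij ∈ antidiagonal n, C ((4 : ℝ) ^ (ij.1 + 1) / ((2 * (ij.1 + 1))! * (2 * ij.2 + 1)!)) *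
        faulhaberPoly A (ij.1 + 1) * X ^ ij.2 =
      C ((2 * (n + 1))! : ℝ)⁻¹ * ((X + C 4) ^ (n + 1) - X ^ (n + 1)) := by
  refine eq_of_infinite_eval_eq _ _ ((Set.Ioo_infinite zero_lt_one).mono fun y hy => ?_)
  simp only [Set.mem_ofPred_eq, eval_finsetSum, eval_mul, eval_C, eval_pow, eval_X, eval_sub,
    eval_add, inv_mul_eq_div]
  exact hA.sum_antidiagonal_eval_faulhaberPoly hA0 hy.1 hy.2 n

theorem sum_antidiagonal_apply (K d : ℕ) :
    ∑ ij ∈ antidiagonal d,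
        (4 : ℝ) ^ (K + ij.1 + 1) / ((2 * (K + ij.1 + 1))! * (2 * ij.2 + 1)!) *
          A (K + ij.1 + 1) ij.1 =
      4 ^ (K + 1) * (K + d + 1).choose d / (2 * (K + d + 1))! := by
  have h := congrArg (coeff · d) (hA.sum_antidiagonal_faulhaberPoly hA0 (K + d))
  simp only [finsetSum_coeff, coeff_C_mul, coeff_mul_X_pow', coeff_faulhaberPoly hA0, coeff_sub,
    coeff_X_add_C_pow, coeff_X_pow] at h
  rw [← Nat.sum_antidiagonal_swap, Nat.sum_antidiagonal_eq_sum_range_succ_mk,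
    show (K + d).succ = d + 1 + K by omega, sum_range_add] at h
  simp only [Prod.swap_prod_mk] at h
  rw [sum_congr rfl fun j hj => if_pos (mem_range_succ_iff.mp hj),
    sum_eq_zero fun j _ => if_neg (by omega), add_zero, if_neg (by omega), sub_zero,
    show K + d + 1 - d = K + 1 by omega, inv_mul_eq_div] at h
  rw [← h, ← Nat.sum_antidiagonal_swap, Nat.sum_antidiagonal_eq_sum_range_succ_mk]
  refine sum_congr rfl fun j hj => ?_
  have hjd := mem_range_succ_iff.mp hj
  rw [Prod.swap_prod_mk, show K + (d - j) = K + d - j by omega]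

theorem apply_succ_zero (K : ℕ) : A (K + 1) 0 = 1 := by
  have h := hA.sum_antidiagonal_apply hA0 K 0
  norm_num [factorial] at h
  exact (mul_eq_left₀ (by positivity)).mp h

theorem apply_add_two_one (K : ℕ) : A (K + 2) 1 = -((K + 2) * K) / 6 := by
  have h := hA.sum_antidiagonal_apply hA0 K 1
  simp only [Nat.sum_antidiagonal_succ, Nat.antidiagonal_zero, sum_singleton] at h
  norm_num [factorial, hA.apply_succ_zero hA0, cast_factorial_two_mul_succ (K + 1), pow_succ] at h
  field_simp at h
  linear_combination h / 24

theorem apply_add_three_two (K : ℕ) :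
    A (K + 3) 2 = (K + 3) * (K + 2) * K * (7 * K + 13) / 360 := by
  have h := hA.sum_antidiagonal_apply hA0 K 2
  simp only [Nat.sum_antidiagonal_succ, Nat.antidiagonal_zero, sum_singleton] at h
  norm_num [factorial, hA.apply_succ_zero hA0, hA.apply_add_two_one hA0,
    cast_factorial_two_mul_succ (K + 2), cast_factorial_two_mul_succ (K + 1), pow_succ,
    Nat.cast_choose_two] at h
  field_simp at h
  linear_combination h / 138240

end HasFaulhaberGenFun

end Faulhaber

/-- For every integer `n ≥ 3`,
`b(n, n−2) = (7/360)(n−3)(n − 8/7) n!(n−2)!/(2n−3)!`. -/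
theorem b_second_subdiagonal
    (A : ℕ → ℕ → ℝ)
    (hA0 : ∀ n k : ℕ, n ≤ k → A n k = 0)
    (hA : ∀ x y : ℝ, |x| < 1 → 0 < y → y < 1 →
      HasSum (fun p : ℕ × ℕ =>
        x ^ (2 * (p.1 + 1)) / (Nat.factorial (2 * (p.1 + 1)) : ℝ) *
          A (p.1 + 1) p.2 * y ^ p.2)
        ((x * Real.sqrt y / 2) *
          (Real.cosh (x / 2 * Real.sqrt (y + 4)) - Real.cosh (x / 2 * Real.sqrt y)) /
          Real.sinh (x / 2 * Real.sqrt y))) :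
    ∀ n : ℕ, 3 ≤ n →
      bcoef A n (n - 2) =
        (7 / 360) * ((n : ℝ) - 3) * ((n : ℝ) - 8 / 7) * (Nat.factorial n : ℝ) *
          (Nat.factorial (n - 2) : ℝ) / (Nat.factorial (2 * n - 3) : ℝ) := by
  intro n hn
  obtain ⟨K, rfl⟩ : ∃ K, n = K + 3 := ⟨n - 3, by omega⟩
  rw [bcoef, show K + 3 - 2 = K + 1 by omega, show K + 3 - (K + 1) = 2 by omega,
    show 2 * (K + 3) - 3 = 2 * (K + 1) + 1 by omega,
    HasFaulhaberGenFun.apply_add_three_two hA hA0, factorial_succ (K + 2), factorial_succ (K + 1)]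
  push_cast
  field_simp
  ring
end
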